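/- arXiv:0905.3151 — 3 statements merged into one kernel-verified Lean document; each statement's English description precedes it below -/
import Mathlib

section
/- Let A and B be finitely generated abelian groups with A a subgroup of B. If for every prime number p the inclusion A → B induces an isomorphism (equivalently, a surjection) A ⊗_ℤ ℤ_p → B ⊗_ℤ ℤ_p, where ℤ_p denotes the ring of p-adic integers, then A = B. -/
/-!
If `A ≠ B`, choose a maximal subgroup `M` with `A ≤ M < B`; then `B ⧸ M ≅ ℤ ⧸ p` for a prime `p`,
giving a nonzero map `φ : B → ℤ ⧸ p` that kills `A`. Base-changing the surjection
`A ⊗ ℤ_p → B ⊗ ℤ_p` along `ℤ_p → ℤ ⧸ p` keeps it surjective, and the `ℤ ⧸ p`-linear extension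
`b ⊗ t ↦ φ b * t` of `φ` kills its image, hence all of `B ⊗ ℤ ⧸ p`; evaluating at `b ⊗ 1` gives
`φ = 0`.
-/

open scoped TensorProduct

namespace LinearMap

variable {R M N : Type*} [CommRing R] [AddCommGroup M] [Module R M] [AddCommGroup N] [Module R N]

theorem rTensor_surjective_of_surjective_rTensor {S T : Type*} [AddCommGroup S] [Module R S]
    [AddCommGroup T] [Module R T] (f : M →ₗ[R] N) {g : S →ₗ[R] T} (hg : Function.Surjective g)
    (hf : Function.Surjective (f.rTensor S)) : Function.Surjective (f.rTensor T) := by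
  refine Function.Surjective.of_comp (g := g.lTensor M) ?_
  rw [← coe_comp, rTensor_comp_lTensor, ← lTensor_comp_rTensor, coe_comp]
  exact (lTensor_surjective N hg).comp hf

theorem eq_zero_of_comp_eq_zero_of_surjective_rTensor {T : Type*} [Semiring T] [Algebra R T]
    (f : M →ₗ[R] N) (hf : Function.Surjective (f.rTensor T)) (φ : N →ₗ[R] T)
    (hφ : φ ∘ₗ f = 0) : φ = 0 := by
  set ψ : N ⊗[R] T →ₗ[R] T := mul' R T ∘ₗ φ.rTensor T
  have hψ : ψ ∘ₗ f.rTensor T = 0 := by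
    rw [comp_assoc, ← rTensor_comp, hφ, rTensor_zero, comp_zero]
  ext n
  obtain ⟨x, hx⟩ := hf (n ⊗ₜ 1)
  calc φ n = ψ (n ⊗ₜ 1) := by simp [ψ]
    _ = 0 := by rw [← hx, ← comp_apply, hψ, zero_apply]

theorem exists_ne_zero_comp_eq_zero_of_not_surjective [IsNoetherian R N] (f : M →ₗ[R] N)
    (hf : ¬ Function.Surjective f) :
    ∃ (I : Ideal R) (_ : I.IsMaximal) (φ : N →ₗ[R] R ⧸ I), φ ≠ 0 ∧ φ ∘ₗ f = 0 := by
  obtain ⟨K, hK, hfK⟩ :=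
    (eq_top_or_exists_le_coatom (range f)).resolve_left (range_eq_top.not.mpr hf)
  have := isSimpleModule_iff_isCoatom.mpr hK
  obtain ⟨I, hI, ⟨e⟩⟩ := isSimpleModule_iff_quot_maximal.mp this
  refine ⟨I, hI, e.toLinearMap ∘ₗ K.mkQ, fun h => hK.1 ?_, ?_⟩
  · refine Submodule.eq_top_iff'.mpr fun n => ?_
    rw [← Submodule.Quotient.mk_eq_zero, ← e.map_eq_zero_iff]
    exact LinearMap.congr_fun h n
  · ext m
    simpa using hfK (mem_range_self f m)

end LinearMap

theorem Int.exists_prime_eq_span_of_isMaximal (I : Ideal ℤ) [hI : I.IsMaximal] :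
    ∃ p : ℕ, p.Prime ∧ I = Ideal.span {(p : ℤ)} := by
  have : NeZero I := ⟨fun h => Int.not_isField <|
    Ring.isField_iff_maximal_bot.mpr (by rw [h] at hI; exact hI)⟩
  exact ⟨_, Nat.absNorm_under_prime I, (Int.ideal_span_absNorm_eq_self I).symm⟩

theorem PadicInt.exists_surjective_linearMap_quotient_span (p : ℕ) [Fact p.Prime] :
    ∃ g : ℤ_[p] →ₗ[ℤ] ℤ ⧸ Ideal.span {(p : ℤ)}, Function.Surjective g :=
  ⟨((Int.quotientSpanNatEquivZMod p).symm.toRingHom.comp toZMod).toIntAlgHom.toLinearMap,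
    (Int.quotientSpanNatEquivZMod p).symm.surjective.comp (ZMod.ringHom_surjective toZMod)⟩

theorem subgroup_eq_top_of_surjective_tensor_padic_general
    {B : Type*} [AddCommGroup B] (hB : AddGroup.FG B)
    (A : AddSubgroup B)
    (h : ∀ (p : ℕ) [Fact p.Prime],
      Function.Surjective
        (LinearMap.rTensor ℤ_[p] A.subtype.toIntLinearMap)) :
    A = ⊤ := by
  have : Module.Finite ℤ B := Module.Finite.iff_addGroup_fg.mpr hB
  by_contra hA
  have hA_not_surj : ¬ Function.Surjective A.subtype.toIntLinearMap := fun hs =>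
    hA ((AddSubgroup.eq_top_iff' A).mpr fun b => by obtain ⟨a, rfl⟩ := hs b; exact a.2)
  obtain ⟨I, hI, φ, hφ, hφA⟩ := LinearMap.exists_ne_zero_comp_eq_zero_of_not_surjective _ hA_not_surj
  obtain ⟨p, hp, rfl⟩ := Int.exists_prime_eq_span_of_isMaximal I
  have : Fact p.Prime := ⟨hp⟩
  obtain ⟨g, hg⟩ := PadicInt.exists_surjective_linearMap_quotient_span p
  have hsurj := LinearMap.rTensor_surjective_of_surjective_rTensor _ hg (h p)
  exact hφ (LinearMap.eq_zero_of_comp_eq_zero_of_surjective_rTensor _ hsurj φ hφA)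

/-- Lemma 2.1 of the paper.
Let `A` be a subgroup of a finitely generated abelian group `B`, with `A`
finitely generated as well.  If for every prime `p` the map
`A ⊗_ℤ ℤ_p → B ⊗_ℤ ℤ_p` induced by the inclusion `A → B` is surjective
(equivalently, an isomorphism, since `ℤ_p` is flat over `ℤ`), then `A = B`. -/
theorem subgroup_eq_top_of_surjective_tensor_padic
    {B : Type*} [AddCommGroup B] (hB : AddGroup.FG B)
    (A : AddSubgroup B) (hA : AddGroup.FG A)
    (h : ∀ (p : ℕ) [Fact p.Prime],
      Function.Surjective
        (LinearMap.rTensor ℤ_[p] A.subtype.toIntLinearMap)) :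
    A = ⊤ :=
  subgroup_eq_top_of_surjective_tensor_padic_general hB A h
end

section
/- Let ⋯ → G_3 → G_2 → G_1 be an inverse system of finitely generated abelian groups indexed by the positive integers, with transition maps f_k : G_{k+1} → G_k. If for every prime number p the inverse limit of the induced system (G_k ⊗_ℤ ℤ_p, f_k ⊗ id) is the zero group, then the inverse limit of the system (G_k, f_k) is the zero group. Equivalently: if (x_k) is a family with x_k ∈ G_k and f_k(x_{k+1}) = x_k for all k, and for every prime p the image of each x_k in G_k ⊗_ℤ ℤ_p forms the zero element of the limit, then every x_k = 0. -/
/-! Since `(x_j ⊗ 1)_j` is a compatible family, `x_k ⊗ 1 = 0` in `G_k ⊗ ℤ_p` for every prime `p`.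
Reducing `ℤ_p → ℤ/p^n` shows `x_k ∈ p^n G_k` for all `n`, so by the Krull intersection theorem
some `r ∈ (p)` satisfies `r • x_k = x_k`. Hence the annihilator of `x_k` lies in no maximal
ideal of `ℤ`, i.e. `x_k = 0`. -/

open TensorProduct

section
variable {R M : Type*} [CommRing R] [AddCommGroup M] [Module R M]

theorem mem_smul_top_of_tmul_one_eq_zero {A : Type*} [Semiring A] [Algebra R A] {I : Ideal R}
    (φ : A →ₐ[R] R ⧸ I) {x : M} (hx : x ⊗ₜ[R] (1 : A) = 0) :
    x ∈ I • (⊤ : Submodule R M) := by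
  have h := congrArg (fun t => tensorQuotEquivQuotSMul M I (φ.toLinearMap.lTensor M t)) hx
  rw [LinearMap.lTensor_tmul, AlgHom.toLinearMap_apply, map_one, ← map_one (Ideal.Quotient.mk I),
    tensorQuotEquivQuotSMul_tmul_mk, one_smul, map_zero] at h
  exact (Submodule.Quotient.mk_eq_zero _).mp h

theorem eq_zero_of_forall_isMaximal_mem_pow_smul_top [IsNoetherianRing R] [Module.Finite R M]
    {x : M} (hx : ∀ m : Ideal R, m.IsMaximal → ∀ n : ℕ, x ∈ m ^ n • (⊤ : Submodule R M)) :
    x = 0 := by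
  suffices Ideal.torsionOf R M x = ⊤ by
    rw [← one_smul R x, ← Ideal.mem_torsionOf_iff, this]
    exact Submodule.mem_top
  by_contra hne
  obtain ⟨m, hm, hle⟩ := Ideal.exists_le_maximal _ hne
  obtain ⟨⟨r, hr⟩, hrx⟩ :=
    (m.mem_iInf_smul_pow_eq_bot_iff x).mp ((Submodule.mem_iInf _).mpr (hx m hm))
  have h1r : 1 - r ∈ m :=
    hle ((Ideal.mem_torsionOf_iff x _).mpr (by rw [sub_smul, one_smul, hrx, sub_self]))
  exact hm.ne_top ((Ideal.eq_top_iff_one m).mpr (by simpa using m.add_mem h1r hr))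

end

theorem Int.exists_prime_and_eq_span_of_isMaximal (m : Ideal ℤ) [m.IsMaximal] :
    ∃ p : ℕ, p.Prime ∧ m = Ideal.span {(p : ℤ)} := by
  have : NeZero m := ⟨Ideal.IsMaximal.ne_bot_of_isIntegral_int m⟩
  refine ⟨_, Nat.absNorm_under_prime m, ?_⟩
  rw [Int.ideal_span_absNorm_eq_self, Ideal.under_def, Algebra.algebraMap_self, Ideal.comap_id]

theorem PadicInt.mem_span_pow_smul_top_of_tmul_one_eq_zero {p : ℕ} [Fact p.Prime]
    {M : Type*} [AddCommGroup M] {x : M} (hx : x ⊗ₜ[ℤ] (1 : ℤ_[p]) = 0) (n : ℕ) :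
    x ∈ Ideal.span {(p : ℤ)} ^ n • (⊤ : Submodule ℤ M) := by
  rw [Ideal.span_singleton_pow, ← Nat.cast_pow]
  exact mem_smul_top_of_tmul_one_eq_zero
    ((Int.quotientSpanNatEquivZMod _).symm.toRingHom.comp (PadicInt.toZModPow n)).toIntAlgHom hx

/-- Lemma 2.2 of the paper.
Let `⋯ → G₃ → G₂ → G₁` be an inverse system of finitely generated abelian
groups (indexed here by `ℕ`), with transition maps `f k : G (k+1) →+ G k`.
If for every prime `p` the inverse limit of the induced system
`(G k ⊗_ℤ ℤ_p, f k ⊗ id)` is the zero group, then the inverse limit of the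
system `(G k, f k)` is the zero group: every compatible family `(x k)` is
identically zero. -/
theorem limit_eq_zero_of_tensor_padic_limit_eq_zero
    (G : ℕ → Type*) [∀ k, AddCommGroup (G k)]
    (hG : ∀ k, AddGroup.FG (G k))
    (f : ∀ k, G (k + 1) →+ G k)
    (h : ∀ (p : ℕ) [Fact p.Prime],
      ∀ y : ∀ k, TensorProduct ℤ (G k) ℤ_[p],
        (∀ k, LinearMap.rTensor ℤ_[p] (f k).toIntLinearMap (y (k + 1)) = y k) →
        ∀ k, y k = 0)
    (x : ∀ k, G k) (hx : ∀ k, f k (x (k + 1)) = x k) :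
    ∀ k, x k = 0 := by
  intro k
  have : Module.Finite ℤ (G k) := Module.Finite.iff_addGroup_fg.mpr (hG k)
  refine eq_zero_of_forall_isMaximal_mem_pow_smul_top (R := ℤ) fun m hm n => ?_
  obtain ⟨p, hp, rfl⟩ := Int.exists_prime_and_eq_span_of_isMaximal m
  have : Fact p.Prime := ⟨hp⟩
  have hxk : x k ⊗ₜ[ℤ] (1 : ℤ_[p]) = 0 :=
    h p (fun j => x j ⊗ₜ 1) (fun j => by
      rw [LinearMap.rTensor_tmul, AddMonoidHom.coe_toIntLinearMap, hx j]) k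
  exact PadicInt.mem_span_pow_smul_top_of_tmul_one_eq_zero hxk n
end

section
/- Let G be a finitely generated abelian group. Then the intersection over all prime numbers p of the kernels of the natural maps G → G ⊗_ℤ ℤ_p (sending x to x ⊗ 1) is the zero subgroup. In other words, if x ∈ G satisfies x ⊗ 1 = 0 in G ⊗_ℤ ℤ_p for every prime p, then x = 0. -/
/-- If `x ⊗ 1 = 0` in `G ⊗ ℤ_p` and `g : G →ₗ[ℤ] A` with a ring hom `φ : ℤ_p →+* A`,
then `g x = 0`. -/
theorem tmul_aux {G : Type*} [AddCommGroup G] {p : ℕ} [Fact p.Prime]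
    {A : Type*} [CommRing A] (φ : ℤ_[p] →+* A) (g : G →ₗ[ℤ] A) (x : G)
    (hx : (x ⊗ₜ[ℤ] (1 : ℤ_[p]) : TensorProduct ℤ G ℤ_[p]) = 0) : g x = 0 := by
  let b : G →ₗ[ℤ] ℤ_[p] →ₗ[ℤ] A :=
    LinearMap.mk₂ ℤ (fun a c => φ c * g a)
      (by intro a a' c; simp [mul_add])
      (by intro n a c; simp [mul_smul_comm]; ring)
      (by intro a c c'; simp [add_mul])
      (by intro n a c; simp [smul_mul_assoc]; ring)
  have := congrArg (TensorProduct.lift b) hx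
  simpa [b] using this

/-- key step in the proof of Lemma 2.2 of the paper.
Let `G` be a finitely generated abelian group.  The intersection over all
primes `p` of the kernels of the natural maps `G → G ⊗_ℤ ℤ_p`, `x ↦ x ⊗ 1`,
is zero: if `x ⊗ 1 = 0` in `G ⊗_ℤ ℤ_p` for every prime `p`, then `x = 0`. -/
theorem eq_zero_of_tmul_one_padic_eq_zero
    {G : Type*} [AddCommGroup G] (hG : AddGroup.FG G)
    (x : G)
    (h : ∀ (p : ℕ) [Fact p.Prime],
      (x ⊗ₜ[ℤ] (1 : ℤ_[p]) : TensorProduct ℤ G ℤ_[p]) = 0) :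
    x = 0 := by
  haveI := hG
  obtain ⟨n, ι, fι, p, hp, e, ⟨f⟩⟩ := AddCommGroup.equiv_free_prod_directSum_zmod G
  by_contra hx
  have hfx : f x ≠ 0 := fun H => hx (by simpa using f.injective (by simpa using H))
  have : (f x).1 ≠ 0 ∨ (f x).2 ≠ 0 := by
    by_contra hc
    push_neg at hc
    exact hfx (Prod.ext hc.1 hc.2)
  rcases this with h1 | h2
  · -- free part: use p = 2
    obtain ⟨j, hj⟩ := Finsupp.ne_iff.mp h1
    haveI : Fact (Nat.Prime 2) := ⟨Nat.prime_two⟩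
    let g : G →ₗ[ℤ] ℤ_[2] :=
      (Int.castRingHom ℤ_[2]).toIntLinearMap ∘ₗ (Finsupp.lapply j) ∘ₗ
        (LinearMap.fst ℤ (Fin n →₀ ℤ) _) ∘ₗ f.toAddMonoidHom.toIntLinearMap
    have h0 := tmul_aux (RingHom.id ℤ_[2]) g x (h 2)
    have : ((f x).1 j : ℤ_[2]) = 0 := h0
    exact hj (by exact_mod_cast this)
  · -- torsion part
    have : ∃ i, (f x).2 i ≠ 0 := by
      by_contra hc
      push_neg at hc
      exact h2 (DFinsupp.ext hc)
    obtain ⟨i, hi⟩ := this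
    haveI : Fact (p i).Prime := ⟨hp i⟩
    let g : G →ₗ[ℤ] ZMod (p i ^ e i) :=
      (DFinsupp.lapply i) ∘ₗ (LinearMap.snd ℤ (Fin n →₀ ℤ) _) ∘ₗ
        f.toAddMonoidHom.toIntLinearMap
    have h0 := tmul_aux (PadicInt.toZModPow (e i)) g x (h (p i))
    exact hi h0
end
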